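/- arXiv:2105.03606 — 4 statements merged into one kernel-verified Lean document; each statement's English description precedes it below -/
import Mathlib

section
/- Multi-channel Kraft inequality: if a (q_1,…,q_n)-ary source code for m source symbols is uniquely decodable, then Σ_{j=1}^m Π_{i=1}^n q_i^{−ℓ_i^j} ≤ 1, where ℓ_i^j is the length of the i-th component of the j-th codeword. -/
/-!
McMillan's argument. The `k`-th power of the Kraft sum `S` is the total weight of the
encodings of the `m ^ k` messages of `k` source symbols. By unique decodability these encodings
are distinct words, all of whose channel lengths are at most `k * B`, where `B` bounds the
codeword lengths. Words with a common length profile have total weight at most `1`, and there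
are at most `(k * B + 1) ^ n` profiles, so `S ^ k` grows at most polynomially in `k`, which
forces `S ≤ 1`.
-/

/-- Channel-wise concatenation of the codewords of a finite sequence of source symbols:
the `i`-th component is the concatenation of the `i`-th components of the codewords. -/
def encodeSeq {n m : ℕ} {q : Fin n → ℕ} (C : Fin m → ∀ i, List (Fin (q i)))
    (s : List (Fin m)) : ∀ i, List (Fin (q i)) :=
  fun i => (s.map fun j => C j i).flatten

/-- A multi-channel source code is uniquely decodable if any two distinct finite sequences of
source symbols yield distinct channel-wise concatenations of their codewords. -/
def UniquelyDecodable {n m : ℕ} {q : Fin n → ℕ}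
    (C : Fin m → ∀ i, List (Fin (q i))) : Prop :=
  Function.Injective (encodeSeq C)

open Finset Filter Asymptotics

theorem le_one_of_pow_le_mul_pow {x c : ℝ} {d : ℕ}
    (h : ∀ᶠ k : ℕ in atTop, x ^ k ≤ c * (k : ℝ) ^ d) : x ≤ 1 := by
  by_contra! hx
  have hx₀ : 0 < x := one_pos.trans hx
  have hbig : (fun k : ℕ => x ^ k) =O[atTop] fun k => (k : ℝ) ^ d :=
    IsBigO.of_bound c <| h.mono fun k hk => by
      rwa [Real.norm_of_nonneg (by positivity), Real.norm_of_nonneg (by positivity)]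
  exact isLittleO_irrefl (.of_forall fun k => (pow_pos hx₀ k).ne')
    (hbig.trans_isLittleO (isLittleO_pow_const_const_pow_of_one_lt d hx))

section KraftSum

variable {ι : Type*} [Fintype ι] {α : ι → Type*} [∀ i, Fintype (α i)]

def lengthProfile (w : ∀ i, List (α i)) : ι → ℕ := fun i => (w i).length

noncomputable def kraftWeight (w : ∀ i, List (α i)) : ℝ :=
  ∏ i, ((Fintype.card (α i) : ℝ)⁻¹) ^ lengthProfile w i

theorem kraftWeight_append (u w : ∀ i, List (α i)) :
    kraftWeight (fun i => u i ++ w i) = kraftWeight u * kraftWeight w := by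
  simp only [kraftWeight, lengthProfile, List.length_append, pow_add, prod_mul_distrib]

theorem card_filter_lengthProfile_eq_le (T : Finset (∀ i, List (α i))) (v : ι → ℕ) :
    #{w ∈ T | lengthProfile w = v} ≤ ∏ i, Fintype.card (α i) ^ v i := by
  classical
  calc #{w ∈ T | lengthProfile w = v}
      ≤ #(univ.image fun x : (∀ i, List.Vector (α i) (v i)) => fun i => (x i).toList) := by
        refine card_le_card fun w hw => ?_
        have hlen : ∀ i, (w i).length = v i := fun i => congrFun (mem_filter.1 hw).2 i
        exact mem_image.2 ⟨fun i => ⟨w i, hlen i⟩, mem_univ _, rfl⟩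
    _ ≤ Fintype.card (∀ i, List.Vector (α i) (v i)) := card_image_le
    _ = ∏ i, Fintype.card (α i) ^ v i := by simp only [Fintype.card_pi, card_vector]

/-- Words with a common length profile `v` number at most `∏ |αᵢ| ^ vᵢ`, and each has
weight `∏ |αᵢ|⁻¹ ^ vᵢ`, so every length profile contributes at most `1`. -/
theorem sum_kraftWeight_le_card_image_lengthProfile (T : Finset (∀ i, List (α i))) :
    ∑ w ∈ T, kraftWeight w ≤ #(T.image lengthProfile) := by
  classical
  rw [← sum_fiberwise_of_maps_to (g := lengthProfile) fun w hw => mem_image_of_mem _ hw]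
  refine (sum_le_sum fun v _ => ?_).trans_eq (by rw [sum_const, nsmul_one])
  calc ∑ w ∈ T with lengthProfile w = v, kraftWeight w
      = #{w ∈ T | lengthProfile w = v} * ∏ i, ((Fintype.card (α i) : ℝ)⁻¹) ^ v i := by
        rw [← nsmul_eq_mul, ← sum_const]
        exact sum_congr rfl fun w hw => by rw [kraftWeight, (mem_filter.1 hw).2]
    _ ≤ (∏ i, (Fintype.card (α i) : ℝ) ^ v i) * ∏ i, ((Fintype.card (α i) : ℝ)⁻¹) ^ v i := by
        gcongr
        exact_mod_cast card_filter_lengthProfile_eq_le T v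
    _ = ∏ i, ((Fintype.card (α i) : ℝ) * (Fintype.card (α i) : ℝ)⁻¹) ^ v i := by
        simp only [← prod_mul_distrib, mul_pow]
    _ ≤ 1 :=
        prod_le_one (fun _ _ => by positivity) fun _ _ => pow_le_one₀ (by positivity) mul_inv_le_one

theorem sum_kraftWeight_le_of_length_le (T : Finset (∀ i, List (α i))) (L : ℕ)
    (hT : ∀ w ∈ T, ∀ i, (w i).length ≤ L) :
    ∑ w ∈ T, kraftWeight w ≤ (L + 1) ^ Fintype.card ι := by
  classical
  refine (sum_kraftWeight_le_card_image_lengthProfile T).trans ?_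
  have hsub : T.image lengthProfile ⊆ Fintype.piFinset fun _ => range (L + 1) := by
    simp only [subset_iff, mem_image, Fintype.mem_piFinset, mem_range]
    rintro _ ⟨w, hw, rfl⟩ i
    exact Nat.lt_succ_of_le (hT w hw i)
  exact_mod_cast (card_le_card hsub).trans_eq (by simp)

end KraftSum

section Code

variable {n m : ℕ} {q : Fin n → ℕ} (C : Fin m → ∀ i, List (Fin (q i)))

theorem encodeSeq_nil : encodeSeq C [] = fun _ => [] := rfl

theorem encodeSeq_cons (j : Fin m) (s : List (Fin m)) :
    encodeSeq C (j :: s) = fun i => C j i ++ encodeSeq C s i := rfl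

theorem kraftWeight_encodeSeq (s : List (Fin m)) :
    kraftWeight (encodeSeq C s) = (s.map fun j => kraftWeight (C j)).prod := by
  induction s with
  | nil => simp [encodeSeq_nil, kraftWeight, lengthProfile]
  | cons j s ih => rw [encodeSeq_cons, kraftWeight_append, ih, List.map_cons, List.prod_cons]

theorem length_encodeSeq_le {B : ℕ} (hB : ∀ j i, (C j i).length ≤ B) (s : List (Fin m))
    (i : Fin n) : (encodeSeq C s i).length ≤ s.length * B := by
  induction s with
  | nil => simp [encodeSeq_nil]
  | cons j s ih =>
    rw [encodeSeq_cons, List.length_append, List.length_cons, Nat.succ_mul]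
    have := hB j i
    omega

theorem sum_kraftWeight_pow (k : ℕ) :
    (∑ j, kraftWeight (C j)) ^ k =
      ∑ p : Fin k → Fin m, kraftWeight (encodeSeq C (List.ofFn p)) := by
  simp only [Fintype.sum_pow, kraftWeight_encodeSeq, List.map_ofFn, List.prod_ofFn,
    Function.comp_def]

variable {C}

theorem UniquelyDecodable.sum_kraftWeight_pow_le (hud : UniquelyDecodable C) {B : ℕ}
    (hB : ∀ j i, (C j i).length ≤ B) (k : ℕ) :
    (∑ j, kraftWeight (C j)) ^ k ≤ (k * B + 1) ^ n := by
  classical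
  rw [sum_kraftWeight_pow,
    ← sum_image (g := fun p => encodeSeq C (List.ofFn p)) fun _ _ _ _ h =>
      hud.comp List.ofFn_injective h]
  refine (sum_kraftWeight_le_of_length_le _ (k * B) ?_).trans_eq (by simp)
  simp only [mem_image, mem_univ, true_and]
  rintro _ ⟨p, rfl⟩ i
  simpa using length_encodeSeq_le C hB (List.ofFn p) i

theorem UniquelyDecodable.sum_kraftWeight_le_one (hud : UniquelyDecodable C) :
    ∑ j, kraftWeight (C j) ≤ 1 := by
  obtain ⟨B, hB⟩ := Finite.exists_le fun ji : Fin m × Fin n => (C ji.1 ji.2).length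
  refine le_one_of_pow_le_mul_pow (c := (B + 1) ^ n) (d := n) ?_
  filter_upwards [eventually_ge_atTop 1] with k hk
  have hk' : (1 : ℝ) ≤ k := by exact_mod_cast hk
  calc (∑ j, kraftWeight (C j)) ^ k ≤ (k * B + 1) ^ n :=
        hud.sum_kraftWeight_pow_le (fun j i => hB (j, i)) k
    _ ≤ ((B + 1) * k) ^ n := by gcongr; nlinarith
    _ = (B + 1) ^ n * k ^ n := mul_pow _ _ _

end Code

theorem multichannel_kraft_inequality_general (n m : ℕ) (q : Fin n → ℕ)
    (C : Fin m → ∀ i, List (Fin (q i)))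
    (hud : UniquelyDecodable C) :
    ∑ j : Fin m, ∏ i : Fin n, ((q i : ℝ)) ^ (-((C j i).length : ℤ)) ≤ 1 := by
  simpa [kraftWeight, lengthProfile, zpow_neg, inv_pow] using hud.sum_kraftWeight_le_one

/-- **Multi-channel Kraft inequality**: if a `(q 1, …, q n)`-ary source code for `m` source
symbols is uniquely decodable, then `∑ j, ∏ i, (q i) ^ (-ℓᵢʲ) ≤ 1`, where `ℓᵢʲ` is the length
of the `i`-th component of the `j`-th codeword. -/
theorem multichannel_kraft_inequality (n m : ℕ) (q : Fin n → ℕ)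
    (hq : ∀ i, 2 ≤ q i) (hmono : Monotone q)
    (C : Fin m → ∀ i, List (Fin (q i)))
    (hud : UniquelyDecodable C) :
    ∑ j : Fin m, ∏ i : Fin n, ((q i : ℝ)) ^ (-((C j i).length : ℤ)) ≤ 1 :=
  multichannel_kraft_inequality_general n m q C hud
end

section
/- For any 2-channel prefix code with at least two codewords, there exists a channel i ∈ {1,2} such that for all codewords the i-th component is a non-empty string. -/
/-- Two multi-channel words are prefix-free (to each other) if there exists at least one
channel `i` such that neither word's `i`-th component is a prefix of the other's. -/
def PrefixFree {n : ℕ} {q : Fin n → ℕ} (w v : ∀ i, List (Fin (q i))) : Prop :=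
  ∃ i, ¬ (w i <+: v i) ∧ ¬ (v i <+: w i)

/-- A multi-channel prefix code: every pair of codewords of distinct source symbols is
prefix-free. -/
def IsPrefixCode {n m : ℕ} {q : Fin n → ℕ} (C : Fin m → ∀ i, List (Fin (q i))) : Prop :=
  ∀ a b, a ≠ b → PrefixFree (C a) (C b)

/-! The empty string is a prefix of every string, so two prefix-free words must both be non-empty
on a common channel. With two channels, a channel that is empty in some codeword `a` and a channel
that is empty in some codeword `b` therefore cannot both exist: they would be the only two
channels, and `a`, `b` (or `a` and any other codeword, when `a = b`) would share neither. -/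

theorem PrefixFree.exists_ne_nil {n : ℕ} {q : Fin n → ℕ} {w v : ∀ i, List (Fin (q i))}
    (h : PrefixFree w v) : ∃ i, w i ≠ [] ∧ v i ≠ [] := by
  obtain ⟨i, hwv, hvw⟩ := h
  refine ⟨i, ?_, ?_⟩ <;> rintro hnil
  · exact hwv (hnil ▸ List.nil_prefix)
  · exact hvw (hnil ▸ List.nil_prefix)

theorem IsPrefixCode.exists_ne_nil {n m : ℕ} {q : Fin n → ℕ} {C : Fin m → ∀ i, List (Fin (q i))}
    (hC : IsPrefixCode C) [Nontrivial (Fin m)] (a b : Fin m) :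
    ∃ i, C a i ≠ [] ∧ C b i ≠ [] := by
  by_cases hab : a = b
  · subst hab
    obtain ⟨c, hca⟩ := exists_ne a
    obtain ⟨i, hai, -⟩ := (hC a c hca.symm).exists_ne_nil
    exact ⟨i, hai, hai⟩
  · exact (hC a b hab).exists_ne_nil

theorem two_channel_prefix_code_has_always_nonempty_channel_general
    (q : Fin 2 → ℕ) (m : ℕ) (hm : 2 ≤ m)
    (C : Fin m → ∀ i, List (Fin (q i))) (hC : IsPrefixCode C) :
    ∃ i : Fin 2, ∀ j, C j i ≠ [] := by
  have : Nontrivial (Fin m) := Fin.nontrivial_iff_two_le.mpr hm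
  by_contra! h
  obtain ⟨a, ha⟩ := h 0
  obtain ⟨b, hb⟩ := h 1
  obtain ⟨i, hai, hbi⟩ := hC.exists_ne_nil a b
  fin_cases i
  · exact hai ha
  · exact hbi hb

/-- For any `2`-channel prefix code with at least two codewords, there exists a channel
`i ∈ {1, 2}` such that for all codewords the `i`-th component is a non-empty string. -/
theorem two_channel_prefix_code_has_always_nonempty_channel
    (q : Fin 2 → ℕ) (hq : ∀ i, 2 ≤ q i) (m : ℕ) (hm : 2 ≤ m)
    (C : Fin m → ∀ i, List (Fin (q i))) (hC : IsPrefixCode C) :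
    ∃ i : Fin 2, ∀ j, C j i ≠ [] :=
  two_channel_prefix_code_has_always_nonempty_channel_general q m hm C hC
end

section
/- Let Q be a 2-channel prefix code such that the i-th component of every codeword is non-empty for a fixed channel i. Partition the codewords according to the first symbol of their i-th component, and within each part delete the first symbol of the i-th component of every codeword. Then within each part, any two words obtained from distinct codewords are prefix-free. -/
/-! When two words have the same head, dropping that head does not change whether one is a
prefix of the other. Hence the channel on which two codewords are prefix-free still separates
them after truncation. -/

theorem List.prefix_of_head?_eq_of_tail_prefix {α : Type*} {l₁ l₂ : List α}
    (hhead : l₁.head? = l₂.head?) (htail : l₁.tail <+: l₂.tail) : l₁ <+: l₂ := by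
  cases l₁ with
  | nil => exact List.nil_prefix
  | cons x xs =>
    cases l₂ with
    | nil => simp at hhead
    | cons y ys =>
      obtain rfl : x = y := Option.some.inj hhead
      exact List.cons_prefix_cons.mpr ⟨rfl, htail⟩

namespace PrefixFree

variable {n : ℕ} {q : Fin n → ℕ} {w v : ∀ i, List (Fin (q i))}

theorem update (h : PrefixFree w v) (i : Fin n) {x y : List (Fin (q i))}
    (hxy : x <+: y → w i <+: v i) (hyx : y <+: x → v i <+: w i) :
    PrefixFree (Function.update w i x) (Function.update v i y) := by
  obtain ⟨k, hwv, hvw⟩ := h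
  refine ⟨k, ?_⟩
  rcases eq_or_ne k i with rfl | hk
  · simp only [Function.update_self]
    exact ⟨mt hxy hwv, mt hyx hvw⟩
  · simpa only [Function.update_of_ne hk] using ⟨hwv, hvw⟩

theorem update_tail (h : PrefixFree w v) (i : Fin n) (hhead : (w i).head? = (v i).head?) :
    PrefixFree (Function.update w i (w i).tail) (Function.update v i (v i).tail) :=
  h.update i (List.prefix_of_head?_eq_of_tail_prefix hhead)
    (List.prefix_of_head?_eq_of_tail_prefix hhead.symm)

end PrefixFree

theorem two_channel_prefix_code_truncation_prefix_free_general
    (q : Fin 2 → ℕ) (m : ℕ)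
    (C : Fin m → ∀ i, List (Fin (q i))) (hC : IsPrefixCode C)
    (i : Fin 2) :
    ∀ a b, a ≠ b → (C a i).head? = (C b i).head? →
      PrefixFree (Function.update (C a) i ((C a i).tail))
        (Function.update (C b) i ((C b i).tail)) :=
  fun a b hab hhead => (hC a b hab).update_tail i hhead

/-- Let `C` be a `2`-channel prefix code such that the `i`-th component of every codeword is
non-empty, for a fixed channel `i`.  Partition the codewords according to the first symbol of
their `i`-th component (two codewords are in the same part iff their `i`-th components have
the same head), and within each part delete the first symbol of the `i`-th component of every
codeword.  Then within each part, any two words obtained from distinct codewords are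
prefix-free. -/
theorem two_channel_prefix_code_truncation_prefix_free
    (q : Fin 2 → ℕ) (hq : ∀ i, 2 ≤ q i) (m : ℕ)
    (C : Fin m → ∀ i, List (Fin (q i))) (hC : IsPrefixCode C)
    (i : Fin 2) (hne : ∀ j, C j i ≠ []) :
    ∀ a b, a ≠ b → (C a i).head? = (C b i).head? →
      PrefixFree (Function.update (C a) i ((C a i).tail))
        (Function.update (C b) i ((C b i).tail)) :=
  two_channel_prefix_code_truncation_prefix_free_general q m C hC i
end

section
/- Local redundancy theorem for multi-channel tree-decodable codes: the redundancy of a multi-channel tree-decodable code equals the sum of the local redundancies of the internal nodes of its decoding tree, i.e., L − H(Z) = Σ_{k ∈ I} r_k nats, where r_k = s_k (ln α_k − h_k) is the local redundancy of internal node k. -/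
/-- A multi-channel decoding tree for an `n`-channel system with alphabet sizes `q i`:
leaves carry probability masses and every internal node is assigned a channel class
`i ∈ {1,…,n}`. -/
inductive PTree (n : ℕ) (q : Fin n → ℕ) : Type
  | leaf (mass : ℝ) : PTree n q
  | node (i : Fin n) (children : List (PTree n q)) : PTree n q

namespace PTree

variable {n : ℕ} {q : Fin n → ℕ}

/-- The list of leaf masses of a decoding tree (in left-to-right order). -/
def leafMasses : PTree n q → List ℝ
  | .leaf x => [x]
  | .node _ cs => (cs.attach.map fun c => leafMasses c.1).flatten
decreasing_by
  simp_wf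
  have := List.sizeOf_lt_of_mem c.2
  omega

/-- The total leaf mass of a tree; for a subtree rooted at an internal node this is the
reaching probability `s` of that node. -/
noncomputable def mass (t : PTree n q) : ℝ := t.leafMasses.sum

/-- Well-formedness of a decoding tree: every internal node of class `i` has at least one
and at most `q i` children (its outgoing edges being labeled by distinct symbols of the
`i`-th alphabet), and all its subtrees are well-formed. -/
inductive WF : PTree n q → Prop
  | leaf (x : ℝ) : WF (.leaf x)
  | node (i : Fin n) (cs : List (PTree n q)) :
      cs ≠ [] → cs.length ≤ q i → (∀ c ∈ cs, WF c) → WF (.node i cs)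

/-- The list of subtrees rooted at the internal nodes of a tree (one entry for each
occurrence of an internal node). -/
def internals : PTree n q → List (PTree n q)
  | .leaf _ => []
  | .node i cs => .node i cs :: (cs.attach.map fun c => internals c.1).flatten
decreasing_by
  simp_wf
  have := List.sizeOf_lt_of_mem c.2
  omega

/-- `ln α` at the root: the natural logarithm of the alphabet size of the channel assigned
to the root node (`0` for a leaf). -/
noncomputable def rootLogAlpha : PTree n q → ℝ
  | .leaf _ => 0
  | .node i _ => Real.log (q i)

/-- The entropy (in nats) of the conditional branching distribution at the root node: the
probabilities are the children's total leaf masses divided by the reaching probability of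
the node (`0` for a leaf). -/
noncomputable def rootBranchEnt : PTree n q → ℝ
  | .leaf _ => 0
  | .node _ cs =>
      -((cs.map fun c => (mass c / (cs.map mass).sum) *
          Real.log (mass c / (cs.map mass).sum)).sum)

/-- The list of pairs (leaf mass, description length of the leaf), where the description
length of a leaf is the sum of `ln (q i)` over its internal-node ancestors of class `i`. -/
noncomputable def leafData : PTree n q → List (ℝ × ℝ)
  | .leaf x => [(x, 0)]
  | .node i cs =>
      ((cs.attach.map fun c => leafData c.1).flatten).map fun pr =>
        (pr.1, pr.2 + Real.log (q i))
decreasing_by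
  simp_wf
  have := List.sizeOf_lt_of_mem c.2
  omega

/-- The expected codeword (description) length of the tree in nats: the expectation of the
leaf description lengths under the leaf masses. -/
noncomputable def expLen (t : PTree n q) : ℝ := (t.leafData.map fun pr => pr.1 * pr.2).sum

end PTree


/-!
Chain rule of entropy: grouping the leaves of a node of mass `s` by child `c` (of mass `m_c`)
gives `∑_{leaves} η p - η s = s h + ∑_c (∑_{leaves of c} η p - η m_c)` with `η x = -x ln x`,
while the node contributes `s ln α` to the expected length. Hence, by induction on the tree,
`L - (∑_{leaves} η p - η s) = ∑_k s_k (ln α_k - h_k)` for all nonnegative masses, and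
`η s = 0` when `s = 1`.
-/

open Real

theorem List.sum_map_negMulLog_eq_negMulLog_sum_add (xs : List ℝ) (hxs : ∀ x ∈ xs, 0 ≤ x) :
    (xs.map negMulLog).sum =
      negMulLog xs.sum + xs.sum * (xs.map fun x => negMulLog (x / xs.sum)).sum := by
  set M := xs.sum
  rcases eq_or_ne M 0 with hM | hM
  · have hzero : ∀ x ∈ xs, x = 0 := fun x hx =>
      le_antisymm (hM ▸ List.single_le_sum hxs x hx) (hxs x hx)
    have hterms : xs.map negMulLog = xs.map fun _ => 0 :=
      List.map_congr_left fun x hx => by rw [hzero x hx, negMulLog_zero]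
    rw [hM, zero_mul, add_zero, negMulLog_zero, hterms]
    simp
  · calc (xs.map negMulLog).sum
        = (xs.map fun x => x * M⁻¹ * negMulLog M + M * negMulLog (x / M)).sum := by
          refine congrArg List.sum (List.map_congr_left fun x _ => ?_)
          rw [← div_eq_mul_inv, ← negMulLog_mul, mul_div_cancel₀ x hM]
      _ = negMulLog M + M * (xs.map fun x => negMulLog (x / M)).sum := by
          rw [List.sum_map_add, List.sum_map_mul_right, List.sum_map_mul_right,
            List.sum_map_mul_left, List.map_id', mul_inv_cancel₀ hM, one_mul]

theorem List.sum_map_flatten_map {α β M : Type*} [AddCommMonoid M] (l : List α)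
    (f : α → List β) (g : β → M) :
    ((l.map f).flatten.map g).sum = (l.map fun a => ((f a).map g).sum).sum := by
  rw [List.map_flatten, List.sum_flatten, List.map_map, List.map_map]
  rfl

namespace PTree

variable {n : ℕ} {q : Fin n → ℕ}

theorem induction {motive : PTree n q → Prop} (leaf : ∀ x, motive (.leaf x))
    (node : ∀ i cs, (∀ c ∈ cs, motive c) → motive (.node i cs)) : ∀ t, motive t
  | .leaf x => leaf x
  | .node i cs => node i cs fun c _ => induction leaf node c
termination_by t => sizeOf t
decreasing_by
  simp_wf
  have := List.sizeOf_lt_of_mem ‹c ∈ cs›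
  omega

theorem leafMasses_node (i : Fin n) (cs : List (PTree n q)) :
    (node i cs).leafMasses = (cs.map leafMasses).flatten := by
  rw [leafMasses, List.attach_map_val]

theorem internals_node (i : Fin n) (cs : List (PTree n q)) :
    (node i cs).internals = node i cs :: (cs.map internals).flatten := by
  rw [internals, List.attach_map_val]

theorem leafData_node (i : Fin n) (cs : List (PTree n q)) :
    (node i cs).leafData = (cs.map leafData).flatten.map fun pr => (pr.1, pr.2 + log (q i)) := by
  rw [leafData, List.attach_map_val]

theorem mass_node (i : Fin n) (cs : List (PTree n q)) :
    (node i cs).mass = (cs.map mass).sum := by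
  simp only [mass, leafMasses_node, List.sum_flatten, List.map_map]
  rfl

theorem leafData_map_fst (t : PTree n q) : t.leafData.map Prod.fst = t.leafMasses := by
  induction t using PTree.induction with
  | leaf x => simp [leafData, leafMasses]
  | node i cs ih =>
    rw [leafData_node, leafMasses_node, List.map_map, List.map_flatten, List.map_map]
    exact congrArg List.flatten
      (List.map_congr_left fun c hc => by simpa [Function.comp_def] using ih c hc)

theorem expLen_node (i : Fin n) (cs : List (PTree n q)) :
    (node i cs).expLen = (cs.map expLen).sum + (node i cs).mass * log (q i) := by
  have hchild (c : PTree n q) :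
      (c.leafData.map fun pr => pr.1 * (pr.2 + log (q i))).sum =
        c.expLen + c.mass * log (q i) := by
    simp only [mul_add, List.sum_map_add, List.sum_map_mul_right, expLen, mass,
      ← leafData_map_fst c]
  rw [expLen, leafData_node, List.map_map, Function.comp_def, List.sum_map_flatten_map,
    List.map_congr_left fun c _ => hchild c, List.sum_map_add, List.sum_map_mul_right, mass_node]

theorem mass_mul_rootBranchEnt_node (i : Fin n) (cs : List (PTree n q))
    (hcs : ∀ c ∈ cs, 0 ≤ c.mass) :
    (node i cs).mass * (node i cs).rootBranchEnt =
      (cs.map fun c => negMulLog c.mass).sum - negMulLog (node i cs).mass := by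
  have hgroup := List.sum_map_negMulLog_eq_negMulLog_sum_add (cs.map mass)
    (by simpa using hcs)
  simp only [List.map_map, Function.comp_def] at hgroup
  rw [hgroup, mass_node, rootBranchEnt, List.sum_neg]
  simp only [List.map_map, Function.comp_def, negMulLog, neg_mul]
  ring

noncomputable def localRedundancy (k : PTree n q) : ℝ :=
  k.mass * (k.rootLogAlpha - k.rootBranchEnt)

theorem sum_localRedundancy_internals_add (t : PTree n q) (hnn : ∀ x ∈ t.leafMasses, 0 ≤ x) :
    (t.internals.map localRedundancy).sum + (t.leafMasses.map negMulLog).sum =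
      t.expLen + negMulLog t.mass := by
  induction t using PTree.induction with
  | leaf x => simp [internals, expLen, leafData, leafMasses, mass]
  | node i cs ih =>
    have hchild : ∀ c ∈ cs, ∀ x ∈ c.leafMasses, 0 ≤ x := fun c hc x hx =>
      hnn x (by rw [leafMasses_node, List.mem_flatten]; exact ⟨_, List.mem_map_of_mem hc, hx⟩)
    have hroot : (node i cs).localRedundancy =
        (node i cs).mass * log (q i) -
          ((cs.map fun c => negMulLog c.mass).sum - negMulLog (node i cs).mass) := by
      rw [localRedundancy, mul_sub, mass_mul_rootBranchEnt_node i cs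
        fun c hc => List.sum_nonneg (hchild c hc)]
      rfl
    have hchildren :
        (cs.map fun c => (c.internals.map localRedundancy).sum).sum +
            (cs.map fun c => (c.leafMasses.map negMulLog).sum).sum =
          (cs.map expLen).sum + (cs.map fun c => negMulLog c.mass).sum := by
      rw [← List.sum_map_add, ← List.sum_map_add]
      exact congrArg List.sum (List.map_congr_left fun c hc => ih c hc (hchild c hc))
    rw [internals_node, List.map_cons, List.sum_cons, List.sum_map_flatten_map, leafMasses_node,
      List.sum_map_flatten_map, expLen_node]
    linarith

end PTree

theorem local_redundancy_theorem_general (n : ℕ) (q : Fin n → ℕ)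
    (t : PTree n q)
    (hnn : ∀ x ∈ t.leafMasses, 0 ≤ x) (hsum : t.leafMasses.sum = 1) :
    t.expLen - (-((t.leafMasses.map fun p => p * Real.log p).sum)) =
      ((t.internals.map fun k => k.mass * (k.rootLogAlpha - k.rootBranchEnt)).sum) := by
  have hmass : t.mass = 1 := hsum
  have hentropy :
      (t.leafMasses.map negMulLog).sum = -(t.leafMasses.map fun p => p * log p).sum := by
    rw [List.sum_neg, List.map_map]
    exact congrArg List.sum (List.map_congr_left fun p _ => neg_mul p (log p))
  have h := PTree.sum_localRedundancy_internals_add t hnn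
  rw [hmass, negMulLog_one, add_zero, hentropy] at h
  rw [← h, add_sub_cancel_right]
  rfl

/-- **Local redundancy theorem** for multi-channel tree-decodable codes: the redundancy of a
tree-decodable code equals the sum of the local redundancies of the internal nodes of its
decoding tree, i.e. `L - H(Z) = ∑_{k ∈ I} r_k` nats, where `r_k = s_k (ln α_k - h_k)`. -/
theorem local_redundancy_theorem (n : ℕ) (q : Fin n → ℕ)
    (hq : ∀ i, 2 ≤ q i) (hmono : Monotone q)
    (t : PTree n q) (hwf : t.WF)
    (hnn : ∀ x ∈ t.leafMasses, 0 ≤ x) (hsum : t.leafMasses.sum = 1) :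
    t.expLen - (-((t.leafMasses.map fun p => p * Real.log p).sum)) =
      ((t.internals.map fun k => k.mass * (k.rootLogAlpha - k.rootBranchEnt)).sum) :=
  local_redundancy_theorem_general n q t hnn hsum
end
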